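/- Fix T > 0, q_a < q_b, V C² 1-periodic with max V = 0. Let E_ε > 0 satisfy ∫_{q_a}^{q_b} 1/√(2(E_ε − V(s/ε))) ds = T for each ε > 0. Then the family {E_ε} is bounded and bounded away from 0 along any sequence ε → 0; in particular every sequence ε_n → 0 has a subsequence along which E_ε converges to some Ē > 0. -/

import Mathlib

/-!
Since `V ≤ 0`, the integrand is at most `1 / √(2E)`, whence `T ≤ (q_b - q_a) / √(2E)` bounds `E`
from above. The interval `[q_a, q_b]` contains at least `(q_b - q_a) / ε - 1` periods of
`V (· / ε)`, so `T ≥ (q_b - q_a - ε) σ(E)` with `σ(E) = ∫₀¹ 1 / √(2 (E - V))`. At a maximum point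
the `C²` function `-V` vanishes quadratically, so `σ(E) ≳ -log E` blows up as `E → 0⁺`; this bounds
`E` from below once `ε ≤ (q_b - q_a) / 2`. Bolzano–Weierstrass gives the convergent subsequence.
-/

open Real intervalIntegral Filter Set Topology

lemma ContDiff.abs_sub_le_mul_sq_of_deriv_eq_zero {V : ℝ → ℝ} (hV : ContDiff ℝ 2 V) {x₀ : ℝ}
    (hx₀ : deriv V x₀ = 0) (r : ℝ) :
    ∃ c : ℝ, 0 ≤ c ∧ ∀ x ∈ Metric.closedBall x₀ r, |V x - V x₀| ≤ c * (x - x₀) ^ 2 := by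
  have hV' : ContDiff ℝ 1 (deriv V) := hV.iterate_deriv' 1 1
  obtain ⟨K, hK⟩ := hV'.contDiffOn.exists_lipschitzOnWith one_ne_zero (convex_closedBall x₀ r)
    (isCompact_closedBall x₀ r)
  refine ⟨K, K.2, fun x hx => ?_⟩
  have hx₀r : x₀ ∈ Metric.closedBall x₀ r := Metric.mem_closedBall_self (dist_nonneg.trans hx)
  have hseg : uIcc x₀ x ⊆ Metric.closedBall x₀ r :=
    segment_eq_uIcc x₀ x ▸ (convex_closedBall x₀ r).segment_subset hx₀r hx
  have hderiv : ∀ t ∈ uIcc x₀ x, ‖deriv V t‖ ≤ K * |x - x₀| := by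
    intro t ht
    have := hK.dist_le_mul t (hseg ht) x₀ hx₀r
    rw [hx₀, dist_zero_right] at this
    exact this.trans (by gcongr; exact abs_sub_left_of_mem_uIcc ht)
  have := (convex_uIcc x₀ x).norm_image_sub_le_of_norm_deriv_le
    (fun t _ => hV.differentiable two_ne_zero t) hderiv left_mem_uIcc right_mem_uIcc
  rwa [Real.norm_eq_abs, Real.norm_eq_abs, mul_assoc, abs_mul_abs_self, ← sq] at this

lemma continuous_one_div_sqrt_two_mul_sub {V : ℝ → ℝ} (hV : Continuous V) {E : ℝ}
    (hE : ∀ x, V x < E) : Continuous fun x => 1 / √(2 * (E - V x)) :=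
  continuous_const.div (by fun_prop) fun x => (sqrt_pos.2 (by linarith [hE x])).ne'

lemma le_div_sq_of_integral_one_div_sqrt_eq {V : ℝ → ℝ} (hV : Continuous V) (hle : ∀ x, V x ≤ 0)
    {E T a b : ℝ} (hE : 0 < E) (hT : 0 < T) (hab : a ≤ b)
    (hTE : ∫ s in a..b, 1 / √(2 * (E - V s)) = T) : E ≤ (b - a) ^ 2 / (2 * T ^ 2) := by
  have hsqrt : 0 < √(2 * E) := sqrt_pos.2 (by positivity)
  have hTle : T ≤ (b - a) * (1 / √(2 * E)) := by
    rw [← hTE, ← smul_eq_mul, ← intervalIntegral.integral_const]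
    refine integral_mono_on hab
      ((continuous_one_div_sqrt_two_mul_sub hV fun x => (hle x).trans_lt hE).intervalIntegrable _ _)
      intervalIntegrable_const fun s _ => ?_
    gcongr
    linarith [hle s]
  have hT2 : T * √(2 * E) ≤ b - a := by
    rwa [mul_one_div, le_div_iff₀ hsqrt] at hTle
  rw [le_div_iff₀ (by positivity)]
  nlinarith [sq_sqrt (by positivity : (0 : ℝ) ≤ 2 * E), mul_self_le_mul_self (by positivity) hT2]

lemma neg_log_div_le_integral_one_div_sqrt {V : ℝ → ℝ} (hV : Continuous V) (hle : ∀ x, V x ≤ 0)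
    {x₀ c : ℝ} (hc : 0 ≤ c) (hquad : ∀ x ∈ Icc x₀ (x₀ + 1), -V x ≤ c * (x - x₀) ^ 2)
    {E : ℝ} (hE : 0 < E) (hE1 : E ≤ 1) :
    -log E / (2 * √(2 * (1 + c))) ≤ ∫ x in x₀..x₀ + 1, 1 / √(2 * (E - V x)) := by
  set K := √(2 * (1 + c))
  set r := √E
  have hK : 0 < K := sqrt_pos.2 (by positivity)
  have hr : 0 < r := sqrt_pos.2 hE
  have hr1 : r ≤ 1 := sqrt_le_one.2 hE1
  have hfc := continuous_one_div_sqrt_two_mul_sub hV fun x => (hle x).trans_lt hE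
  -- beyond distance `√E` from the maximum, `E - V x ≤ (1 + c) (x - x₀)²`
  have hpoint : ∀ x ∈ Icc (x₀ + r) (x₀ + 1), K⁻¹ * (x - x₀)⁻¹ ≤ 1 / √(2 * (E - V x)) := by
    intro x hx
    have hxr : r ≤ x - x₀ := by linarith [hx.1]
    have hEx : E ≤ (x - x₀) ^ 2 := by
      simpa only [r, sq_sqrt hE.le] using pow_le_pow_left₀ hr.le hxr 2
    have hsq : 2 * (E - V x) ≤ (K * (x - x₀)) ^ 2 := by
      rw [mul_pow, sq_sqrt (by positivity)]
      nlinarith [hquad x ⟨by linarith [hx.1], hx.2⟩]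
    rw [← mul_inv, ← one_div]
    gcongr
    · exact sqrt_pos.2 (by linarith [hle x])
    · exact (sqrt_le_left (by nlinarith)).2 hsq
  have hlog : ∫ x in x₀ + r..x₀ + 1, K⁻¹ * (x - x₀)⁻¹ = -log E / (2 * K) := by
    rw [intervalIntegral.integral_const_mul, intervalIntegral.integral_comp_sub_right
      (fun u => u⁻¹), add_sub_cancel_left, add_sub_cancel_left, integral_inv_of_pos hr one_pos,
      one_div, log_inv, log_sqrt hE.le]
    field_simp
  have hcont : ContinuousOn (fun x => K⁻¹ * (x - x₀)⁻¹) (uIcc (x₀ + r) (x₀ + 1)) := by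
    refine continuousOn_const.mul ((continuous_sub_right x₀).continuousOn.inv₀ fun x hx => ?_)
    rw [uIcc_of_le (by linarith)] at hx
    exact (sub_pos.2 (by linarith [hx.1])).ne'
  have hfar : ∫ x in x₀ + r..x₀ + 1, K⁻¹ * (x - x₀)⁻¹ ≤
      ∫ x in x₀ + r..x₀ + 1, 1 / √(2 * (E - V x)) :=
    integral_mono_on (by linarith) hcont.intervalIntegrable (hfc.intervalIntegrable _ _) hpoint
  have hnear : 0 ≤ ∫ x in x₀..x₀ + r, 1 / √(2 * (E - V x)) :=
    integral_nonneg (by linarith) fun x _ => by positivity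
  rw [← hlog, ← integral_add_adjacent_intervals (hfc.intervalIntegrable x₀ (x₀ + r))
    (hfc.intervalIntegrable _ _)]
  linarith

lemma tendsto_integral_one_div_sqrt_nhdsGT_zero {V : ℝ → ℝ} (hV : ContDiff ℝ 2 V)
    (hper : Function.Periodic V 1) (hmax : IsGreatest (range V) 0) :
    Tendsto (fun E => ∫ x in (0 : ℝ)..1, 1 / √(2 * (E - V x))) (𝓝[>] 0) atTop := by
  obtain ⟨⟨x₀, hx₀⟩, hub⟩ := hmax
  have hle : ∀ x, V x ≤ 0 := fun x => hub ⟨x, rfl⟩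
  have hderiv : deriv V x₀ = 0 :=
    IsLocalMax.deriv_eq_zero (Eventually.of_forall fun y => hx₀ ▸ hle y)
  obtain ⟨c, hc, hcV⟩ := hV.abs_sub_le_mul_sq_of_deriv_eq_zero hderiv 1
  have hquad : ∀ x ∈ Icc x₀ (x₀ + 1), -V x ≤ c * (x - x₀) ^ 2 := fun x hx => by
    have := hcV x (by rw [Real.closedBall_eq_Icc]; exact ⟨by linarith [hx.1], hx.2⟩)
    rw [hx₀, sub_zero] at this
    exact (neg_le_abs _).trans this
  have hlog : Tendsto (fun E => -log E / (2 * √(2 * (1 + c)))) (𝓝[>] 0) atTop :=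
    (tendsto_neg_atBot_atTop.comp tendsto_log_nhdsGT_zero).atTop_div_const
      (by positivity)
  refine tendsto_atTop_mono' _ ?_ hlog
  filter_upwards [Ioc_mem_nhdsGT one_pos] with E hE
  have hshift := (hper.comp fun v => 1 / √(2 * (E - v))).intervalIntegral_add_eq x₀ 0
  rw [zero_add] at hshift
  exact (neg_log_div_le_integral_one_div_sqrt hV.continuous hle hc hquad hE.1 hE.2).trans_eq hshift

lemma Function.Periodic.sub_mul_integral_le_integral_comp_div {f : ℝ → ℝ} (hf : Periodic f 1)
    (hfc : Continuous f) (hf0 : ∀ x, 0 ≤ f x) {a b ε : ℝ} (hab : a ≤ b) (hε : 0 < ε) :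
    (b - a - ε) * ∫ x in (0 : ℝ)..1, f x ≤ ∫ s in a..b, f (s / ε) := by
  set σ := ∫ x in (0 : ℝ)..1, f x
  set L := b / ε - a / ε
  set n := ⌊L⌋
  have hσ : 0 ≤ σ := integral_nonneg zero_le_one fun x _ => hf0 x
  have hn0 : 0 ≤ (n : ℝ) := by
    exact_mod_cast Int.floor_nonneg.2 (sub_nonneg.2 (div_le_div_of_nonneg_right hab hε.le))
  have hnL : (n : ℝ) ≤ L := Int.floor_le L
  have hperiods : ∫ x in a / ε..a / ε + n, f x = n * σ := by
    have := hf.intervalIntegral_add_zsmul_eq n (a / ε) fun _ _ => hfc.intervalIntegrable _ _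
    rwa [zsmul_eq_mul, mul_one, hf.intervalIntegral_add_eq (a / ε) 0, zero_add, zsmul_eq_mul]
      at this
  calc (b - a - ε) * σ = ε * ((L - 1) * σ) := by simp only [L]; field_simp
    _ ≤ ε * (n * σ) := by gcongr; linarith [Int.sub_one_lt_floor L]
    _ ≤ ε * ∫ x in a / ε..b / ε, f x := by
      rw [← hperiods]
      gcongr
      exact integral_mono_interval le_rfl (by linarith) (by linarith)
        (Eventually.of_forall hf0) (hfc.intervalIntegrable _ _)
    _ = ∫ s in a..b, f (s / ε) := by rw [intervalIntegral.integral_comp_div f hε.ne', smul_eq_mul]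

lemma half_mul_integral_one_div_sqrt_le {V : ℝ → ℝ} (hV : Continuous V)
    (hper : Function.Periodic V 1) (hle : ∀ x, V x ≤ 0) {E T a b ε : ℝ} (hE : 0 < E)
    (hε : 0 < ε) (hεab : ε ≤ (b - a) / 2)
    (hTE : ∫ s in a..b, 1 / √(2 * (E - V (s / ε))) = T) :
    (b - a) / 2 * ∫ x in (0 : ℝ)..1, 1 / √(2 * (E - V x)) ≤ T := by
  have hσ : 0 ≤ ∫ x in (0 : ℝ)..1, 1 / √(2 * (E - V x)) :=
    integral_nonneg zero_le_one fun x _ => by positivity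
  have hperiods := (hper.comp fun v => 1 / √(2 * (E - v))).sub_mul_integral_le_integral_comp_div
    (continuous_one_div_sqrt_two_mul_sub hV fun x => (hle x).trans_lt hE)
    (fun x => one_div_nonneg.2 (sqrt_nonneg _)) (by linarith : a ≤ b) hε
  calc (b - a) / 2 * ∫ x in (0 : ℝ)..1, 1 / √(2 * (E - V x))
      ≤ (b - a - ε) * ∫ x in (0 : ℝ)..1, 1 / √(2 * (E - V x)) := by gcongr; linarith
    _ ≤ T := hTE ▸ hperiods

lemma exists_lt_forall_le_of_eventually_le {α : Type*} [LinearOrder α] {u : ℕ → α} {a b : α}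
    (hu : ∀ n, a < u n) (hab : a < b) (hb : ∀ᶠ n in atTop, b ≤ u n) :
    ∃ m, a < m ∧ ∀ n, m ≤ u n := by
  obtain ⟨N, hN⟩ := eventually_atTop.1 hb
  obtain ⟨k, -, hk⟩ := (Finset.range (N + 1)).exists_min_image u ⟨0, by simp⟩
  refine ⟨min b (u k), lt_min hab (hu k), fun n => ?_⟩
  rcases le_or_gt N n with hn | hn
  · exact (min_le_left _ _).trans (hN n hn)
  · exact (min_le_right _ _).trans (hk n (Finset.mem_range.2 (by omega)))

/-- Theorem 2.7 (compactness of the energies): if `E_ε > 0` realises the fixed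
    travel time `T`, then along any positive sequence `ε_n → 0` the energies are
    bounded and bounded away from `0`, and some subsequence converges to a limit
    `Ē > 0`. -/
theorem bvp_fixed_time_energy_compactness
    (V : ℝ → ℝ) (hV : ContDiff ℝ 2 V) (hper : Function.Periodic V 1)
    (hmax : IsGreatest (Set.range V) 0)
    (T q_a q_b : ℝ) (hT : 0 < T) (hab : q_a < q_b)
    (Eε : ℝ → ℝ)
    (hEpos : ∀ ε > (0:ℝ), 0 < Eε ε)
    (htime : ∀ ε > (0:ℝ),
      (∫ s in q_a..q_b, 1 / Real.sqrt (2 * (Eε ε - V (s / ε)))) = T) :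
    ∀ εn : ℕ → ℝ, (∀ n, 0 < εn n) → Tendsto εn atTop (nhds 0) →
      (∃ M : ℝ, ∀ n, Eε (εn n) ≤ M) ∧
      (∃ m : ℝ, 0 < m ∧ ∀ n, m ≤ Eε (εn n)) ∧
      ∃ φ : ℕ → ℕ, StrictMono φ ∧ ∃ Ebar : ℝ, 0 < Ebar ∧
        Tendsto (fun n => Eε (εn (φ n))) atTop (nhds Ebar) := by
  intro εn hεn hεn0
  have hle : ∀ x, V x ≤ 0 := fun x => hmax.2 ⟨x, rfl⟩
  have hupper : ∀ n, Eε (εn n) ≤ (q_b - q_a) ^ 2 / (2 * T ^ 2) := fun n =>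
    le_div_sq_of_integral_one_div_sqrt_eq (hV.continuous.comp (continuous_id.div_const (εn n)))
      (fun s => hle _) (hEpos _ (hεn n)) hT hab.le (htime _ (hεn n))
  have hd : 0 < q_b - q_a := sub_pos.2 hab
  set A := 2 * T / (q_b - q_a)
  obtain ⟨δ, hδ, hσ⟩ := mem_nhdsGT_iff_exists_Ioo_subset.1
    ((tendsto_integral_one_div_sqrt_nhdsGT_zero hV hper hmax).eventually_gt_atTop A)
  have hlower : ∀ ε ∈ Ioo 0 ((q_b - q_a) / 2), δ ≤ Eε ε := by
    rintro ε ⟨hε, hεsmall⟩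
    by_contra! hsmall
    have hAσ := mul_lt_mul_of_pos_left (hσ ⟨hEpos ε hε, hsmall⟩) (half_pos hd)
    have hσT := half_mul_integral_one_div_sqrt_le hV.continuous hper hle (hEpos ε hε) hε
      hεsmall.le (htime ε hε)
    have hAT : (q_b - q_a) / 2 * A = T := by simp only [A]; field_simp
    linarith
  obtain ⟨m, hm, hmle⟩ := exists_lt_forall_le_of_eventually_le (fun n => hEpos _ (hεn n)) hδ <| by
    filter_upwards [hεn0.eventually (Iio_mem_nhds (half_pos hd))]
      with n hn using hlower _ ⟨hεn n, hn⟩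
  obtain ⟨Ebar, hEbar, φ, hφ, hlim⟩ := isCompact_Icc.tendsto_subseq fun n => ⟨hmle n, hupper n⟩
  exact ⟨⟨_, hupper⟩, ⟨m, hm, hmle⟩, φ, hφ, Ebar, hm.trans_le hEbar.1, hlim⟩
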